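/- arXiv:1201.4259 — 9 statements merged into one kernel-verified Lean document; each statement's English description precedes it below -/
import Mathlib

section
/- Let L₂ →^{φ₂} L₁ →^{φ₁} L₀ be a complex of R-modules with compatible filtrations. Assume each filtration is bounded below (there is N ∈ ℤ with F_d(L_i) = 0 for all d < N and all i) and exhaustive (⋃_d F_d(L_i) = L_i for all i). Suppose that for every d ∈ ℤ the associated graded complex is exact at the middle position in degree d: for every x ∈ F_d(L₁) with φ₁(x) ∈ F_{d-1}(L₀), there exist y ∈ F_d(L₂) and z ∈ F_{d-1}(L₁) with x = φ₂(y) + z. Then for every d ∈ ℤ one has ker φ₁ ∩ F_d(L₁) = φ₂(F_d(L₂)); in particular ker φ₁ = im φ₂, i.e. the complex is exact at L₁. -/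
/-- If the filtrations are bounded below and exhaustive and the associated graded
complex is exact at the middle position in every degree, then every filtered
subcomplex `F_d(L_•)` is exact at the middle position; in particular the complex
itself is exact at `L₁`. -/
theorem filtered_exact_of_graded_exact
    {R : Type*} [Ring R]
    {L0 L1 L2 : Type*}
    [AddCommGroup L0] [AddCommGroup L1] [AddCommGroup L2]
    [Module R L0] [Module R L1] [Module R L2]
    (φ1 : L1 →ₗ[R] L0) (φ2 : L2 →ₗ[R] L1)
    (hc : φ1.comp φ2 = 0)
    (F0 : ℤ → Submodule R L0) (F1 : ℤ → Submodule R L1) (F2 : ℤ → Submodule R L2)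
    (hF0 : Monotone F0) (hF1 : Monotone F1) (hF2 : Monotone F2)
    (hcomp1 : ∀ d : ℤ, Submodule.map φ1 (F1 d) ≤ F0 d)
    (hcomp2 : ∀ d : ℤ, Submodule.map φ2 (F2 d) ≤ F1 d)
    (hbdd : ∃ N : ℤ, ∀ d : ℤ, d < N → F0 d = ⊥ ∧ F1 d = ⊥ ∧ F2 d = ⊥)
    (hexh0 : ∀ x : L0, ∃ d : ℤ, x ∈ F0 d)
    (hexh1 : ∀ x : L1, ∃ d : ℤ, x ∈ F1 d)
    (hexh2 : ∀ x : L2, ∃ d : ℤ, x ∈ F2 d)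
    (hgr : ∀ d : ℤ, ∀ x ∈ F1 d, φ1 x ∈ F0 (d - 1) →
      ∃ y ∈ F2 d, ∃ z ∈ F1 (d - 1), x = φ2 y + z) :
    (∀ d : ℤ, LinearMap.ker φ1 ⊓ F1 d = Submodule.map φ2 (F2 d)) ∧
      LinearMap.ker φ1 = LinearMap.range φ2 := by
  obtain ⟨N, hN⟩ := hbdd
  have key : ∀ n : ℕ, ∀ d : ℤ, d < N + n → ∀ x ∈ F1 d, φ1 x = 0 →
      ∃ y ∈ F2 d, φ2 y = x := by
    intro n
    induction n with
    | zero =>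
      intro d hd x hx _
      rw [(hN d (by simpa using hd)).2.1] at hx
      rw [Submodule.mem_bot] at hx
      exact ⟨0, Submodule.zero_mem _, by simp [hx]⟩
    | succ n ih =>
      intro d hd x hx hker
      rcases lt_or_ge d (N + n) with h | h
      · exact ih d h x hx hker
      · obtain ⟨y, hy, z, hz, hxz⟩ := hgr d x hx (by
          rw [hker]; exact Submodule.zero_mem _)
        have hc' : φ1 (φ2 y) = 0 := by
          have := LinearMap.congr_fun hc y
          simpa using this
        have hφz : φ1 z = 0 := by
          have h2 := congrArg φ1 hxz
          rw [map_add, hc', zero_add, hker] at h2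
          exact h2.symm
        obtain ⟨w, hw, hww⟩ := ih (d - 1) (by omega) z hz hφz
        refine ⟨y + w, Submodule.add_mem _ hy (hF2 (by omega) hw), ?_⟩
        rw [map_add, hww, hxz]
  have main : ∀ d : ℤ, LinearMap.ker φ1 ⊓ F1 d = Submodule.map φ2 (F2 d) := by
    intro d
    apply le_antisymm
    · rintro x ⟨hk, hx⟩
      obtain ⟨y, hy, hyx⟩ := key (d - N + 1).toNat d (by omega) x hx hk
      exact ⟨y, hy, hyx⟩
    · rintro x ⟨y, hy, rfl⟩
      refine ⟨?_, hcomp2 d ⟨y, hy, rfl⟩⟩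
      have := LinearMap.congr_fun hc y
      simpa using this
  refine ⟨main, le_antisymm ?_ ?_⟩
  · intro x hx
    obtain ⟨d, hd⟩ := hexh1 x
    have : x ∈ Submodule.map φ2 (F2 d) := (main d) ▸ ⟨hx, hd⟩
    obtain ⟨y, _, rfl⟩ := this
    exact ⟨y, rfl⟩
  · rintro x ⟨y, rfl⟩
    have := LinearMap.congr_fun hc y
    simpa using this
end

section
/- Let (L_i, φ_i)_{i ∈ ℤ} be a complex of R-modules with compatible filtrations, where for each i the filtration of L_i is bounded below (there is N_i ∈ ℤ with F_d(L_i) = 0 for all d < N_i) and exhaustive (⋃_d F_d(L_i) = L_i). Then the following are equivalent: (i) for every i and every d ∈ ℤ, ker φ_i ∩ F_d(L_i) = φ_{i+1}(F_d(L_{i+1})); (ii) for every i and every d ∈ ℤ, and every x ∈ F_d(L_i) with φ_i(x) ∈ F_{d-1}(L_{i-1}), there exist y ∈ F_d(L_{i+1}) and z ∈ F_{d-1}(L_i) such that x = φ_{i+1}(y) + z. -/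
/-- For a complex of filtered modules with filtrations bounded below and exhaustive,
exactness of every filtered subcomplex is equivalent to exactness of the associated
graded complex in every degree.  Here `ψ i : L (i+1) → L i` is the differential of
the complex. -/
theorem filtered_exact_iff_graded_exact
    {R : Type*} [Ring R]
    (L : ℤ → Type*) [∀ i, AddCommGroup (L i)] [∀ i, Module R (L i)]
    (ψ : ∀ i : ℤ, L (i + 1) →ₗ[R] L i)
    (hc : ∀ i : ℤ, (ψ i).comp (ψ (i + 1)) = 0)
    (F : ∀ i : ℤ, ℤ → Submodule R (L i))
    (hmono : ∀ i : ℤ, Monotone (F i))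
    (hcomp : ∀ i d : ℤ, Submodule.map (ψ i) (F (i + 1) d) ≤ F i d)
    (hbdd : ∀ i : ℤ, ∃ N : ℤ, ∀ d : ℤ, d < N → F i d = ⊥)
    (hexh : ∀ i : ℤ, ∀ x : L i, ∃ d : ℤ, x ∈ F i d) :
    (∀ i d : ℤ,
        LinearMap.ker (ψ i) ⊓ F (i + 1) d = Submodule.map (ψ (i + 1)) (F (i + 1 + 1) d))
      ↔
    (∀ i d : ℤ, ∀ x ∈ F (i + 1) d, ψ i x ∈ F i (d - 1) →
        ∃ y ∈ F (i + 1 + 1) d, ∃ z ∈ F (i + 1) (d - 1), x = ψ (i + 1) y + z) := by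
  constructor
  · -- (i) → (ii)
    intro hi i d x hx hψ
    obtain ⟨j, rfl⟩ : ∃ j, i = j + 1 := ⟨i - 1, by omega⟩
    have hker : ψ (j + 1) x ∈ LinearMap.ker (ψ j) := by
      have := LinearMap.congr_fun (hc j) x
      simpa [LinearMap.mem_ker] using this
    have h1 : ψ (j + 1) x ∈ Submodule.map (ψ (j + 1)) (F (j + 1 + 1) (d - 1)) := by
      rw [← hi j (d - 1)]
      exact ⟨hker, hψ⟩
    obtain ⟨w, hw, hww⟩ := h1
    have h2 : x - w ∈ LinearMap.ker (ψ (j + 1)) ⊓ F (j + 1 + 1) d := by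
      constructor
      · simp [LinearMap.mem_ker, map_sub, hww]
      · exact Submodule.sub_mem _ hx (hmono _ (by omega) hw)
    rw [hi (j + 1) d] at h2
    obtain ⟨y, hy, hyy⟩ := h2
    exact ⟨y, hy, w, hw, by rw [hyy]; abel⟩
  · -- (ii) → (i)
    intro hii i d
    apply le_antisymm
    · obtain ⟨N, hN⟩ := hbdd (i + 1)
      have key : ∀ n : ℕ, ∀ d : ℤ, d < N + n → ∀ x : L (i + 1), ψ i x = 0 →
          x ∈ F (i + 1) d → x ∈ Submodule.map (ψ (i + 1)) (F (i + 1 + 1) d) := by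
        intro n
        induction n with
        | zero =>
          intro d hd x hx1 hx2
          rw [hN d (by omega)] at hx2
          simp only [Submodule.mem_bot] at hx2
          subst hx2
          exact Submodule.zero_mem _
        | succ n ih =>
          intro d hd x hx1 hx2
          by_cases hdn : d < N + n
          · exact ih d hdn x hx1 hx2
          obtain ⟨y, hy, z, hz, hxyz⟩ := hii i d x hx2
            (by rw [hx1]; exact Submodule.zero_mem _)
          have hψy : ψ i (ψ (i + 1) y) = 0 := by
            have := LinearMap.congr_fun (hc i) y
            simpa using this
          have hz0 : ψ i z = 0 := by
            have : ψ i x = ψ i (ψ (i + 1) y) + ψ i z := by rw [hxyz]; simp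
            rw [hx1, hψy] at this
            simpa using this.symm
          obtain ⟨y', hy', hyz⟩ := ih (d - 1) (by omega) z hz0 hz
          refine ⟨y + y', Submodule.add_mem _ hy (hmono _ (by omega) hy'), ?_⟩
          rw [map_add, hyz, hxyz]
      rintro x ⟨hx1, hx2⟩
      exact key ((d - N + 1).toNat) d (by omega) x hx1 hx2
    · rintro _ ⟨y, hy, rfl⟩
      refine ⟨?_, hcomp (i + 1) d ⟨y, hy, rfl⟩⟩
      have := LinearMap.congr_fun (hc i) y
      simpa [LinearMap.mem_ker] using this
end

section
/- Consider a commutative diagram of R-modules M₂ →^{φ₂} M₁ →^{φ₁} M₀ and N₂ →^{ψ₂} N₁ →^{ψ₁} N₀ with vertical maps α_i : M_i → N_i (i = 0,1,2), where the rows are complexes (φ₁∘φ₂ = 0 and ψ₁∘ψ₂ = 0), the squares commute (α₁∘φ₂ = ψ₂∘α₂ and α₀∘φ₁ = ψ₁∘α₁), and there are submodules F(M_i) ⊆ M_i, F(N_i) ⊆ N_i with φ_i(F(M_i)) ⊆ F(M_{i-1}), ψ_i(F(N_i)) ⊆ F(N_{i-1}), and α_i(F(M_i)) ⊆ F(N_i).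 Assume α₁ induces an isomorphism (ker φ₁)/(im φ₂) ≅ (ker ψ₁)/(im ψ₂) and an isomorphism (ker φ₁ ∩ F(M₁))/φ₂(F(M₂)) ≅ (ker ψ₁ ∩ F(N₁))/ψ₂(F(N₂)). Then α₁ induces an isomorphism (im φ₂ ∩ F(M₁))/φ₂(F(M₂)) ≅ (im ψ₂ ∩ F(N₁))/ψ₂(F(N₂)). -/
/-- Paper's Lemma 2.4.  Given a commutative diagram of filtered complexes of length
two, if `α₁` induces isomorphisms on homology `(ker φ₁)/(im φ₂) ≅ (ker ψ₁)/(im ψ₂)` and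
on filtered homology `(ker φ₁ ∩ F(M₁))/φ₂(F(M₂)) ≅ (ker ψ₁ ∩ F(N₁))/ψ₂(F(N₂))`, then it
induces an isomorphism `(im φ₂ ∩ F(M₁))/φ₂(F(M₂)) ≅ (im ψ₂ ∩ F(N₁))/ψ₂(F(N₂))`.
All "induced isomorphisms" are expressed elementwise (injectivity and surjectivity of
the induced maps on the subquotients). -/
theorem induced_iso_on_image_subquotient
    {R : Type*} [Ring R]
    {M0 M1 M2 N0 N1 N2 : Type*}
    [AddCommGroup M0] [AddCommGroup M1] [AddCommGroup M2]
    [AddCommGroup N0] [AddCommGroup N1] [AddCommGroup N2]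
    [Module R M0] [Module R M1] [Module R M2]
    [Module R N0] [Module R N1] [Module R N2]
    (φ1 : M1 →ₗ[R] M0) (φ2 : M2 →ₗ[R] M1)
    (ψ1 : N1 →ₗ[R] N0) (ψ2 : N2 →ₗ[R] N1)
    (α0 : M0 →ₗ[R] N0) (α1 : M1 →ₗ[R] N1) (α2 : M2 →ₗ[R] N2)
    (hcM : φ1.comp φ2 = 0) (hcN : ψ1.comp ψ2 = 0)
    (hsq2 : α1.comp φ2 = ψ2.comp α2) (hsq1 : α0.comp φ1 = ψ1.comp α1)
    (FM0 : Submodule R M0) (FM1 : Submodule R M1) (FM2 : Submodule R M2)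
    (FN0 : Submodule R N0) (FN1 : Submodule R N1) (FN2 : Submodule R N2)
    (hφ1F : Submodule.map φ1 FM1 ≤ FM0) (hφ2F : Submodule.map φ2 FM2 ≤ FM1)
    (hψ1F : Submodule.map ψ1 FN1 ≤ FN0) (hψ2F : Submodule.map ψ2 FN2 ≤ FN1)
    (hα0F : Submodule.map α0 FM0 ≤ FN0) (hα1F : Submodule.map α1 FM1 ≤ FN1)
    (hα2F : Submodule.map α2 FM2 ≤ FN2)
    -- α₁ induces an isomorphism (ker φ₁)/(im φ₂) ≅ (ker ψ₁)/(im ψ₂):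
    (hH_inj : ∀ x ∈ LinearMap.ker φ1,
      α1 x ∈ LinearMap.range ψ2 → x ∈ LinearMap.range φ2)
    (hH_surj : ∀ y ∈ LinearMap.ker ψ1,
      ∃ x ∈ LinearMap.ker φ1, y - α1 x ∈ LinearMap.range ψ2)
    -- α₁ induces an isomorphism (ker φ₁ ∩ F(M₁))/φ₂(F(M₂)) ≅ (ker ψ₁ ∩ F(N₁))/ψ₂(F(N₂)):
    (hHF_inj : ∀ x ∈ LinearMap.ker φ1 ⊓ FM1,
      α1 x ∈ Submodule.map ψ2 FN2 → x ∈ Submodule.map φ2 FM2)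
    (hHF_surj : ∀ y ∈ LinearMap.ker ψ1 ⊓ FN1,
      ∃ x ∈ LinearMap.ker φ1 ⊓ FM1, y - α1 x ∈ Submodule.map ψ2 FN2) :
    -- conclusion: α₁ induces an isomorphism
    -- (im φ₂ ∩ F(M₁))/φ₂(F(M₂)) ≅ (im ψ₂ ∩ F(N₁))/ψ₂(F(N₂)):
    (∀ x ∈ LinearMap.range φ2 ⊓ FM1,
      α1 x ∈ Submodule.map ψ2 FN2 → x ∈ Submodule.map φ2 FM2) ∧
    (∀ y ∈ LinearMap.range ψ2 ⊓ FN1,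
      ∃ x ∈ LinearMap.range φ2 ⊓ FM1, y - α1 x ∈ Submodule.map ψ2 FN2) := by
  have hrk : LinearMap.range φ2 ≤ LinearMap.ker φ1 := by
    rintro _ ⟨z, rfl⟩
    exact LinearMap.congr_fun hcM z
  have hrkN : LinearMap.range ψ2 ≤ LinearMap.ker ψ1 := by
    rintro _ ⟨z, rfl⟩
    exact LinearMap.congr_fun hcN z
  constructor
  · intro x hx hαx
    exact hHF_inj x ⟨hrk hx.1, hx.2⟩ hαx
  · intro y hy
    obtain ⟨x, hx, hxy⟩ := hHF_surj y ⟨hrkN hy.1, hy.2⟩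
    refine ⟨x, ⟨?_, hx.2⟩, hxy⟩
    have h1 : α1 x ∈ LinearMap.range ψ2 := by
      have : α1 x = y - (y - α1 x) := by abel
      rw [this]
      exact Submodule.sub_mem _ hy.1 (by obtain ⟨z, _, hz⟩ := hxy; exact ⟨z, hz⟩)
    exact hH_inj x hx.1 h1
end

section
/- Consider a commutative diagram of R-modules M₂ →^{φ₂} M₁ →^{φ₁} M₀ and N₂ →^{ψ₂} N₁ →^{ψ₁} N₀ with vertical maps α_i : M_i → N_i (i = 0,1,2), where the rows are complexes (φ₁∘φ₂ = 0 and ψ₁∘ψ₂ = 0), the squares commute (α₁∘φ₂ = ψ₂∘α₂ and α₀∘φ₁ = ψ₁∘α₁), and there are submodules F(M_i) ⊆ M_i, F(N_i) ⊆ N_i with φ_i(F(M_i)) ⊆ F(M_{i-1}), ψ_i(F(N_i)) ⊆ F(N_{i-1}), and α_i(F(M_i)) ⊆ F(N_i). Assume α₁ induces an isomorphism (ker φ₁)/(im φ₂) ≅ (ker ψ₁)/(im ψ₂) and an isomorphism (ker φ₁ ∩ F(M₁))/φ₂(F(M₂)) ≅ (ker ψ₁ ∩ F(N₁))/ψ₂(F(N₂)).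 Then the strictness conditions are equivalent: im φ₂ ∩ F(M₁) = φ₂(F(M₂)) if and only if im ψ₂ ∩ F(N₁) = ψ₂(F(N₂)). -/
/-- Paper's Lemma 2.4.  Given a commutative diagram of filtered complexes of length
two, if `α₁` induces isomorphisms on homology `(ker φ₁)/(im φ₂) ≅ (ker ψ₁)/(im ψ₂)` and
on filtered homology `(ker φ₁ ∩ F(M₁))/φ₂(F(M₂)) ≅ (ker ψ₁ ∩ F(N₁))/ψ₂(F(N₂))`, then
`φ₂` is strict (`im φ₂ ∩ F(M₁) = φ₂(F(M₂))`) iff `ψ₂` is strict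
(`im ψ₂ ∩ F(N₁) = ψ₂(F(N₂))`).
All "induced isomorphisms" are expressed elementwise (injectivity and surjectivity of
the induced maps on the subquotients). -/
theorem strictness_transfer
    {R : Type*} [Ring R]
    {M0 M1 M2 N0 N1 N2 : Type*}
    [AddCommGroup M0] [AddCommGroup M1] [AddCommGroup M2]
    [AddCommGroup N0] [AddCommGroup N1] [AddCommGroup N2]
    [Module R M0] [Module R M1] [Module R M2]
    [Module R N0] [Module R N1] [Module R N2]
    (φ1 : M1 →ₗ[R] M0) (φ2 : M2 →ₗ[R] M1)
    (ψ1 : N1 →ₗ[R] N0) (ψ2 : N2 →ₗ[R] N1)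
    (α0 : M0 →ₗ[R] N0) (α1 : M1 →ₗ[R] N1) (α2 : M2 →ₗ[R] N2)
    (hcM : φ1.comp φ2 = 0) (hcN : ψ1.comp ψ2 = 0)
    (hsq2 : α1.comp φ2 = ψ2.comp α2) (hsq1 : α0.comp φ1 = ψ1.comp α1)
    (FM0 : Submodule R M0) (FM1 : Submodule R M1) (FM2 : Submodule R M2)
    (FN0 : Submodule R N0) (FN1 : Submodule R N1) (FN2 : Submodule R N2)
    (hφ1F : Submodule.map φ1 FM1 ≤ FM0) (hφ2F : Submodule.map φ2 FM2 ≤ FM1)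
    (hψ1F : Submodule.map ψ1 FN1 ≤ FN0) (hψ2F : Submodule.map ψ2 FN2 ≤ FN1)
    (hα0F : Submodule.map α0 FM0 ≤ FN0) (hα1F : Submodule.map α1 FM1 ≤ FN1)
    (hα2F : Submodule.map α2 FM2 ≤ FN2)
    -- α₁ induces an isomorphism (ker φ₁)/(im φ₂) ≅ (ker ψ₁)/(im ψ₂):
    (hH_inj : ∀ x ∈ LinearMap.ker φ1,
      α1 x ∈ LinearMap.range ψ2 → x ∈ LinearMap.range φ2)
    (hH_surj : ∀ y ∈ LinearMap.ker ψ1,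
      ∃ x ∈ LinearMap.ker φ1, y - α1 x ∈ LinearMap.range ψ2)
    -- α₁ induces an isomorphism (ker φ₁ ∩ F(M₁))/φ₂(F(M₂)) ≅ (ker ψ₁ ∩ F(N₁))/ψ₂(F(N₂)):
    (hHF_inj : ∀ x ∈ LinearMap.ker φ1 ⊓ FM1,
      α1 x ∈ Submodule.map ψ2 FN2 → x ∈ Submodule.map φ2 FM2)
    (hHF_surj : ∀ y ∈ LinearMap.ker ψ1 ⊓ FN1,
      ∃ x ∈ LinearMap.ker φ1 ⊓ FM1, y - α1 x ∈ Submodule.map ψ2 FN2) :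
    -- conclusion: the strictness conditions are equivalent:
    (LinearMap.range φ2 ⊓ FM1 = Submodule.map φ2 FM2) ↔
      (LinearMap.range ψ2 ⊓ FN1 = Submodule.map ψ2 FN2) := by
  constructor
  · intro hM
    apply le_antisymm
    · rintro y ⟨⟨n, rfl⟩, hyF⟩
      have hyk : ψ2 n ∈ LinearMap.ker ψ1 := by
        simp [LinearMap.mem_ker, ← LinearMap.comp_apply, hcN]
      obtain ⟨x, ⟨hxk, hxF⟩, hd⟩ := hHF_surj (ψ2 n) ⟨hyk, hyF⟩
      obtain ⟨w, hw, hweq⟩ := hd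
      have hax : α1 x ∈ LinearMap.range ψ2 := by
        have : α1 x = ψ2 n - ψ2 w := by rw [hweq]; abel
        exact this ▸ ⟨n - w, by simp⟩
      have hxr : x ∈ LinearMap.range φ2 := hH_inj x hxk hax
      have hxm : x ∈ Submodule.map φ2 FM2 := hM ▸ ⟨hxr, hxF⟩
      obtain ⟨m, hm, rfl⟩ := hxm
      have hax2 : α1 (φ2 m) ∈ Submodule.map ψ2 FN2 := by
        have : α1 (φ2 m) = ψ2 (α2 m) := by
          rw [← LinearMap.comp_apply, hsq2, LinearMap.comp_apply]
        exact this ▸ ⟨α2 m, hα2F ⟨m, hm, rfl⟩, rfl⟩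
      have : ψ2 n = (ψ2 n - α1 (φ2 m)) + α1 (φ2 m) := by abel
      rw [this]
      exact Submodule.add_mem _ ⟨w, hw, hweq⟩ hax2
    · exact le_inf (fun y ⟨n, _, h⟩ => ⟨n, h⟩) hψ2F
  · intro hN
    apply le_antisymm
    · rintro x ⟨⟨m, rfl⟩, hxF⟩
      have hxk : φ2 m ∈ LinearMap.ker φ1 := by
        simp [LinearMap.mem_ker, ← LinearMap.comp_apply, hcM]
      apply hHF_inj (φ2 m) ⟨hxk, hxF⟩
      have heq : α1 (φ2 m) = ψ2 (α2 m) := by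
        rw [← LinearMap.comp_apply, hsq2, LinearMap.comp_apply]
      rw [← hN, heq]
      exact ⟨⟨α2 m, rfl⟩, heq ▸ hα1F ⟨φ2 m, hxF, rfl⟩⟩
    · exact le_inf (fun x ⟨m, _, h⟩ => ⟨m, h⟩) hφ2F
end

section
/- Let R be a ring, M an R-module, t : M → M an R-linear endomorphism, and (F_d)_{d ∈ ℤ} an increasing family of submodules of M that is exhaustive (⋃_d F_d = M), separated (⋂_d F_d = 0), and satisfies t(F_d) ⊆ F_d for all d. Then the following are equivalent: (i) t is injective and for every d ∈ ℤ, F_d ∩ (range t) = t(F_d); (ii) for every d ∈ ℤ and every x ∈ F_d with t(x) ∈ F_{d-1}, one has x ∈ F_{d-1}. -/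
/-- Paper's Lemma 3.4: for an endomorphism `t` preserving an exhaustive, separated,
increasing filtration `(F_d)` of `M`, `t` is injective with `F_d ∩ range t = t(F_d)`
for all `d` if and only if the map induced by `t` on the associated graded module is
injective (condition (ii)). -/
theorem strict_injective_iff_graded_injective
    {R : Type*} [Ring R] {M : Type*} [AddCommGroup M] [Module R M]
    (t : M →ₗ[R] M)
    (F : ℤ → Submodule R M)
    (hmono : Monotone F)
    (hexh : ∀ x : M, ∃ d : ℤ, x ∈ F d)
    (hsep : (⨅ d : ℤ, F d) = ⊥)
    (ht : ∀ d : ℤ, Submodule.map t (F d) ≤ F d) :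
    (Function.Injective t ∧
        ∀ d : ℤ, F d ⊓ LinearMap.range t = Submodule.map t (F d))
      ↔
    (∀ d : ℤ, ∀ x ∈ F d, t x ∈ F (d - 1) → x ∈ F (d - 1)) := by
  constructor
  · rintro ⟨hinj, hstrict⟩ d x hx htx
    have hmem : t x ∈ F (d - 1) ⊓ LinearMap.range t := ⟨htx, ⟨x, rfl⟩⟩
    rw [hstrict] at hmem
    obtain ⟨y, hy, hyx⟩ := hmem
    rwa [← hinj hyx]
  · intro h
    -- key descent lemma
    have key : ∀ n : ℕ, ∀ e : ℤ, ∀ x : M, x ∈ F (e + n) → t x ∈ F e → x ∈ F e := by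
      intro n
      induction n with
      | zero => intro e x hx _; simpa using hx
      | succ n ih =>
        intro e x hx htx
        apply ih e x
        · have h1 : x ∈ F (e + (n + 1)) := by
            have : (e + ((n : ℤ) + 1)) = e + ((n : ℕ) + 1 : ℕ) := by push_cast; ring
            rwa [← this] at hx
          have h2 : t x ∈ F (e + (n + 1) - 1) := hmono (by omega) htx
          have h3 := h (e + ((n : ℤ) + 1)) x h1 h2
          have : (e + ((n : ℤ) + 1) - 1) = e + (n : ℕ) := by push_cast; ring
          rwa [this] at h3
        · exact htx
    have hinj : Function.Injective t := by
      intro a b hab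
      have hz : t (a - b) = 0 := by rw [map_sub, hab, sub_self]
      suffices hmem : a - b ∈ (⨅ d : ℤ, F d) by
        rw [hsep] at hmem
        simpa [sub_eq_zero] using hmem
      obtain ⟨d, hd⟩ := hexh (a - b)
      refine Submodule.mem_iInf _ |>.mpr fun e => ?_
      rcases le_or_gt d e with hde | hde
      · exact hmono hde hd
      · refine key (d - e).toNat e (a - b) ?_ (by rw [hz]; exact Submodule.zero_mem _)
        have : e + ((d - e).toNat : ℤ) = d := by omega
        rwa [this]
    refine ⟨hinj, fun d => le_antisymm ?_ (le_inf (ht d) (LinearMap.map_le_range))⟩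
    rintro y ⟨hyF, x, rfl⟩
    obtain ⟨e, hx⟩ := hexh x
    rcases le_or_gt e d with hed | hed
    · exact ⟨x, hmono hed hx, rfl⟩
    · refine ⟨x, ?_, rfl⟩
      refine key (e - d).toNat d x ?_ hyF
      have : d + ((e - d).toNat : ℤ) = e := by omega
      rwa [this]
end

section
/- Let R be a ring, M an R-module, t : M → M an R-linear endomorphism, and (F_d)_{d ∈ ℤ} an increasing family of submodules of M that is exhaustive (⋃_d F_d = M), separated (⋂_d F_d = 0), and satisfies t(F_d) ⊆ F_d for all d. Let V, V' be submodules of M with (range t) ∩ V = t(V'). Assume that for every d ∈ ℤ and every x ∈ F_d with t(x) ∈ F_{d-1} one has x ∈ F_{d-1} (i.e. t is injective on the associated graded module). Then t is injective and for every d ∈ ℤ, (range t) ∩ (F_d ∩ V) = t(F_d ∩ V'). -/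
/-- Abstract form of the paper's Proposition 3.2: if `t` is injective on the
associated graded module of an exhaustive, separated, increasing filtration `(F_d)`
preserved by `t`, and `(range t) ∩ V = t(V')`, then `t` is injective and
`(range t) ∩ (F_d ∩ V) = t(F_d ∩ V')` for every `d`. -/
theorem injective_and_bifiltration_strict
    {R : Type*} [Ring R] {M : Type*} [AddCommGroup M] [Module R M]
    (t : M →ₗ[R] M)
    (F : ℤ → Submodule R M)
    (hmono : Monotone F)
    (hexh : ∀ x : M, ∃ d : ℤ, x ∈ F d)
    (hsep : (⨅ d : ℤ, F d) = ⊥)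
    (ht : ∀ d : ℤ, Submodule.map t (F d) ≤ F d)
    (V V' : Submodule R M)
    (hV : LinearMap.range t ⊓ V = Submodule.map t V')
    (hgr : ∀ d : ℤ, ∀ x ∈ F d, t x ∈ F (d - 1) → x ∈ F (d - 1)) :
    Function.Injective t ∧
      ∀ d : ℤ, LinearMap.range t ⊓ (F d ⊓ V) = Submodule.map t (F d ⊓ V') := by
  -- key descent lemma
  have key : ∀ (d : ℤ) (n : ℕ) (x : M), x ∈ F (d + n) → t x ∈ F d → x ∈ F d := by
    intro d n
    induction n with
    | zero => intro x hx _; simpa using hx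
    | succ n ih =>
      intro x hx htx
      refine ih x ?_ htx
      have h1 : x ∈ F (d + (n + 1 : ℕ) - 1) := by
        apply hgr _ x hx
        exact hmono (by omega) htx
      have he : d + ((n : ℤ) + 1) - 1 = d + (n : ℤ) := by omega
      simpa [he] using h1
  have key' : ∀ (d : ℤ) (x : M), t x ∈ F d → x ∈ F d := by
    intro d x htx
    obtain ⟨e, he⟩ := hexh x
    exact key d (e - d).toNat x (hmono (by omega) he) htx
  have hinj : Function.Injective t := by
    intro a b hab
    have h0 : t (a - b) = 0 := by rw [map_sub, hab, sub_self]
    have : a - b ∈ ⨅ d : ℤ, F d := by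
      refine Submodule.mem_iInf _ |>.2 fun d => key' d _ ?_
      rw [h0]; exact (F d).zero_mem
    rw [hsep] at this
    exact sub_eq_zero.mp (by simpa using this)
  refine ⟨hinj, fun d => le_antisymm ?_ ?_⟩
  · rintro y ⟨⟨x, rfl⟩, hFd, hVy⟩
    have : t x ∈ Submodule.map t V' := hV ▸ ⟨⟨x, rfl⟩, hVy⟩
    obtain ⟨x', hx', hxx⟩ := this
    exact ⟨x', ⟨key' d x' (by rw [hxx]; exact hFd), hx'⟩, hxx⟩
  · rintro y hy
    obtain ⟨x, ⟨hFx, hV'x⟩, rfl⟩ := hy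
    refine ⟨⟨x, rfl⟩, ht d ⟨x, hFx, rfl⟩, ?_⟩
    have h2 : t x ∈ LinearMap.range t ⊓ V := hV ▸ ⟨x, hV'x, rfl⟩
    exact h2.2
end

section
/- Let R be a ring (not necessarily commutative) with a filtration (F_d)_{d ∈ ℤ}: an increasing family of additive subgroups of R that is exhaustive (⋃_d F_d = R) and satisfies F_d · F_e ⊆ F_{d+e} for all d, e. Let P₁, …, P_r ∈ R, let n₁, …, n_r ∈ ℤ, and let I = Σ_j R·P_j be the left ideal they generate. Suppose given relations R₁, …, R_s ∈ R^r and integers m₁, …, m_s such that Σ_j R_{i,j} P_j = 0 and R_{i,j} ∈ F_{m_i - n_j} for all i, j, and suppose that these relations generate the relations among symbols: for every d ∈ ℤ and every (Q₁, …, Q_r) with Q_j ∈ F_{d - n_j} for all j and Σ_j Q_j P_j ∈ F_{d-1}, there exist b₁, …, b_s with b_i ∈ F_{d - m_i} and Q_j − Σ_i b_i R_{i,j} ∈ F_{d - n_j - 1} for all j. Then (P₁, …, P_r) is an F-involutive base of I: for every P ∈ I and every d ∈ ℤ with P ∈ F_d, there exist Q₁, …, Q_r with Q_j ∈ F_{d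 - n_j} for all j and P = Σ_j Q_j P_j. -/
/-- Paper's Proposition 1.6 (criterion for an `F`-involutive base).  In a filtered
ring, if the relations among the symbols of `P₁, …, P_r` are generated by relations
`R₁, …, R_s` that hold exactly among the `P_j` themselves, then `(P₁, …, P_r)` is an
`F`-involutive base of the left ideal `I = Σ_j R·P_j`: every `P ∈ I` lying in `F_d`
can be written `P = Σ_j Q_j P_j` with `Q_j ∈ F_{d - n_j}`. -/
theorem involutive_base_of_liftable_relations
    {A : Type*} [Ring A]
    (F : ℤ → AddSubgroup A)
    (hmono : Monotone F)
    (hexh : ∀ a : A, ∃ d : ℤ, a ∈ F d)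
    (hmul : ∀ d e : ℤ, ∀ a ∈ F d, ∀ b ∈ F e, a * b ∈ F (d + e))
    {r s : ℕ} (P : Fin r → A) (n : Fin r → ℤ)
    (Rel : Fin s → Fin r → A) (m : Fin s → ℤ)
    (hrel : ∀ i : Fin s, ∑ j, Rel i j * P j = 0)
    (hrelF : ∀ (i : Fin s) (j : Fin r), Rel i j ∈ F (m i - n j))
    (hgen : ∀ (d : ℤ) (Q : Fin r → A), (∀ j, Q j ∈ F (d - n j)) →
      (∑ j, Q j * P j) ∈ F (d - 1) →
      ∃ b : Fin s → A, (∀ i, b i ∈ F (d - m i)) ∧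
        ∀ j, Q j - ∑ i, b i * Rel i j ∈ F (d - n j - 1)) :
    ∀ (Pel : A) (d : ℤ), Pel ∈ F d →
      (∃ c : Fin r → A, Pel = ∑ j, c j * P j) →
      ∃ Q : Fin r → A, (∀ j, Q j ∈ F (d - n j)) ∧ Pel = ∑ j, Q j * P j := by

  rintro Pel d hPd ⟨c, hc⟩
  choose g hg using fun j => hexh (c j)
  suffices h : ∀ (k : ℕ) (Q : Fin r → A), (∀ j, Q j ∈ F (d + k - n j)) →
      Pel = ∑ j, Q j * P j →
      ∃ Q' : Fin r → A, (∀ j, Q' j ∈ F (d - n j)) ∧ Pel = ∑ j, Q' j * P j by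
    set k : ℕ := Finset.univ.sup fun j => (g j + n j - d).toNat with hk
    refine h k c (fun j => hmono ?_ (hg j)) hc
    have h1 : (g j + n j - d).toNat ≤ k := by
      rw [hk]
      exact Finset.le_sup (f := fun j => (g j + n j - d).toNat) (Finset.mem_univ j)
    have h2 : g j + n j - d ≤ ((g j + n j - d).toNat : ℤ) := Int.self_le_toNat _
    have h3 : ((g j + n j - d).toNat : ℤ) ≤ (k : ℤ) := by exact_mod_cast h1
    omega
  intro k
  induction k with
  | zero =>
    intro Q hQ hEq
    exact ⟨Q, fun j => by simpa using hQ j, hEq⟩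
  | succ k ih =>
    intro Q hQ hEq
    have hcast : ∀ j, d + ((k+1 : ℕ) : ℤ) - n j = (d + k + 1) - n j := by
      intro j; push_cast; ring
    have hQ' : ∀ j, Q j ∈ F (d + k + 1 - n j) := fun j => by
      rw [← hcast j]; exact hQ j
    have hPk : (∑ j, Q j * P j) ∈ F (d + k + 1 - 1) := by
      rw [← hEq]; exact hmono (by omega) hPd
    obtain ⟨b, hb, hQb⟩ := hgen (d + k + 1) Q hQ' hPk
    refine ih (fun j => Q j - ∑ i, b i * Rel i j) (fun j => ?_) ?_
    · have := hQb j
      have : d + k + 1 - n j - 1 = d + (k : ℤ) - n j := by ring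
      rw [← this]; exact hQb j
    · have hzero : (∑ j, (∑ i, b i * Rel i j) * P j) = 0 := by
        calc ∑ j, (∑ i, b i * Rel i j) * P j
            = ∑ j, ∑ i, b i * (Rel i j * P j) := by
              simp [Finset.sum_mul, mul_assoc]
          _ = ∑ i, ∑ j, b i * (Rel i j * P j) := Finset.sum_comm
          _ = 0 := by
              simp only [← Finset.mul_sum]
              simp [hrel]
      rw [hEq]
      simp [sub_mul, Finset.sum_sub_distrib, hzero]
end

section
/- Let K be a commutative ring, n ≥ 1, let f ∈ K[x₁, …, x_n] be a polynomial, let w : Fin n → K be weights, let θ be the Euler operator θ(g) = Σ_k w_k · x_k · ∂_k g, and for indices i, j let S_{i,j} be the operator S_{i,j}(g) = ∂_i f · ∂_j g − ∂_j f · ∂_i g. If θ(f) = f, then for all i, j and every polynomial g: θ(S_{i,j}(g)) − S_{i,j}(θ(g)) = (1 − w_i − w_j) · S_{i,j}(g). -/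
open MvPolynomial

private lemma pderiv_comm' {K : Type*} [CommRing K] {n : ℕ} (i j : Fin n)
    (p : MvPolynomial (Fin n) K) :
    pderiv i (pderiv j p) = pderiv j (pderiv i p) := by
  induction p using MvPolynomial.induction_on with
  | C a => simp [pderiv_C]
  | add p q hp hq => simp [map_add, hp, hq]
  | mul_X p k hp =>
    have e1 : ∀ a : Fin n, pderiv a (X k : MvPolynomial (Fin n) K)
        = if a = k then 1 else 0 := by
      intro a
      split
      · subst ‹a = k›; simp
      · exact pderiv_X_of_ne (Ne.symm ‹a ≠ k›)
    simp only [pderiv_mul, map_add, e1, hp]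
    split_ifs <;> simp [pderiv_one] <;> ring

private lemma theta_pderiv {K : Type*} [CommRing K] {n : ℕ} (w : Fin n → K) (j : Fin n)
    (h : MvPolynomial (Fin n) K) :
    pderiv j (∑ k, C (w k) * X k * pderiv k h) =
      C (w j) * pderiv j h + ∑ k, C (w k) * X k * pderiv k (pderiv j h) := by
  rw [map_sum]
  have : ∀ k : Fin n, pderiv j (C (w k) * X k * pderiv k h) =
      (if k = j then C (w k) * pderiv k h else 0) + C (w k) * X k * pderiv j (pderiv k h) := by
    intro k
    rw [pderiv_mul, pderiv_mul, pderiv_C]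
    rcases eq_or_ne k j with rfl | h'
    · simp
      try ring
    · simp [pderiv_X_of_ne h', h']
  simp only [this, Finset.sum_add_distrib, Finset.sum_ite_eq' Finset.univ j, Finset.mem_univ,
    if_true]
  congr 1
  exact Finset.sum_congr rfl fun k _ => by rw [pderiv_comm' j k]

/-- Commutation relation `[θ, S_{i,j}] = (1 - w_i - w_j) S_{i,j}` for a
quasi-homogeneous polynomial `f`, where `θ(g) = Σ_k w_k x_k ∂_k g` and
`S_{i,j}(g) = ∂_i f · ∂_j g - ∂_j f · ∂_i g`. -/
theorem euler_commutes_with_S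
    {K : Type*} [CommRing K] {n : ℕ} (hn : 1 ≤ n)
    (f : MvPolynomial (Fin n) K) (w : Fin n → K)
    (hf : (∑ k, C (w k) * X k * pderiv k f) = f) :
    ∀ (i j : Fin n) (g : MvPolynomial (Fin n) K),
      (∑ k, C (w k) * X k *
          pderiv k (pderiv i f * pderiv j g - pderiv j f * pderiv i g)) -
        (pderiv i f * pderiv j (∑ k, C (w k) * X k * pderiv k g) -
          pderiv j f * pderiv i (∑ k, C (w k) * X k * pderiv k g)) =
      C (1 - w i - w j) * (pderiv i f * pderiv j g - pderiv j f * pderiv i g) := by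
  intro i j g
  have hA : ∀ m : Fin n, (∑ k, C (w k) * X k * pderiv k (pderiv m f)) =
      (1 - C (w m)) * pderiv m f := by
    intro m
    have := congrArg (pderiv m) hf
    rw [theta_pderiv] at this
    linear_combination this
  have expand : (∑ k, C (w k) * X k *
      pderiv k (pderiv i f * pderiv j g - pderiv j f * pderiv i g)) =
      (∑ k, C (w k) * X k * pderiv k (pderiv i f)) * pderiv j g
      + pderiv i f * (∑ k, C (w k) * X k * pderiv k (pderiv j g))
      - (∑ k, C (w k) * X k * pderiv k (pderiv j f)) * pderiv i g
      - pderiv j f * (∑ k, C (w k) * X k * pderiv k (pderiv i g)) := by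
    rw [Finset.sum_mul, Finset.mul_sum, Finset.sum_mul, Finset.mul_sum,
      ← Finset.sum_add_distrib, ← Finset.sum_sub_distrib, ← Finset.sum_sub_distrib]
    refine Finset.sum_congr rfl fun k _ => ?_
    rw [map_sub, pderiv_mul, pderiv_mul]
    ring
  rw [expand, theta_pderiv, theta_pderiv, hA i, hA j]
  simp only [map_sub, map_one]
  ring
end

section
/- Let K be a commutative ring, n ≥ 1, let f ∈ K[x₁, …, x_n] be a polynomial, let w : Fin n → K be weights, let θ be the Euler operator θ(g) = Σ_i w_i · x_i · ∂_i g, and for indices i, j let S_{i,j} be the operator S_{i,j}(g) = ∂_i f · ∂_j g − ∂_j f · ∂_i g. If θ(f) = f, then for every integer m ≥ 1, every index j, and every polynomial g: −∂_j(f^m · g) + f^{m-1} · ∂_j f · (θ(g) + m·g) − Σ_i w_i · x_i · f^{m-1} · S_{j,i}(g) = 0. -/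
open MvPolynomial

/-- The operator identity
`-∂_j ∘ f^m + f^{m-1} f'_j (θ + m) - Σ_i w_i x_i f^{m-1} S_{j,i} = 0` (applied to `g`)
for a quasi-homogeneous polynomial `f` with `θ(f) = f`, where
`θ(g) = Σ_i w_i x_i ∂_i g` and `S_{j,i}(g) = ∂_j f · ∂_i g - ∂_i f · ∂_j g`. -/
theorem pderiv_pow_euler_identity
    {K : Type*} [CommRing K] {n : ℕ} (hn : 1 ≤ n)
    (f : MvPolynomial (Fin n) K) (w : Fin n → K)
    (hf : (∑ i, C (w i) * X i * pderiv i f) = f) :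
    ∀ (m : ℕ), 1 ≤ m → ∀ (j : Fin n) (g : MvPolynomial (Fin n) K),
      -pderiv j (f ^ m * g) +
        f ^ (m - 1) * pderiv j f * ((∑ i, C (w i) * X i * pderiv i g) + m • g) -
        (∑ i, C (w i) * X i *
          (f ^ (m - 1) * (pderiv j f * pderiv i g - pderiv i f * pderiv j g))) = 0 := by
  intro m hm j g
  obtain ⟨k, rfl⟩ : ∃ k, m = k + 1 := ⟨m - 1, (Nat.succ_pred_eq_of_pos hm).symm⟩
  have key : (∑ i, C (w i) * X i *
      (f ^ (k + 1 - 1) * (pderiv j f * pderiv i g - pderiv i f * pderiv j g))) =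
      f ^ k * pderiv j f * (∑ i, C (w i) * X i * pderiv i g) -
      f ^ k * pderiv j g * (∑ i, C (w i) * X i * pderiv i f) := by
    rw [Finset.mul_sum, Finset.mul_sum, ← Finset.sum_sub_distrib]
    exact Finset.sum_congr rfl fun i _ => by simp only [Nat.add_sub_cancel]; ring
  rw [key, hf]
  have hd : pderiv j (f ^ (k + 1) * g) =
      (k + 1) * (f ^ k * pderiv j f * g) + f ^ (k + 1) * pderiv j g := by
    rw [pderiv_mul, Derivation.leibniz_pow]
    simp [nsmul_eq_mul]
    ring
  rw [hd]
  simp only [nsmul_eq_mul, Nat.cast_add, Nat.cast_one, Nat.add_sub_cancel]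
  ring
end
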